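/- Let p be a probability distribution on Fin k, let X_1, ..., X_n be independent samples drawn from p, and let p̂ be the empirical distribution. For any δ ∈ (0,1), setting ε = sqrt((2/n)·(k·log 2 + log(1/δ))), the event ‖p̂ − p‖₁ < ε holds with probability greater than 1 − δ. -/

import Mathlib

/-!
For probability vectors `‖p̂ - p‖₁ = 2 (p̂(S) - p(S))` with `S = {j | p j ≤ p̂ j}`, so an ℓ1
deviation of at least `ε` forces the number of samples falling in some nonempty `S ⊆ Fin k` to
exceed its mean by `nε/2`. By Hoeffding's inequality each of these events has probability at most
`exp (-nε²/2) = δ / 2^k`, and a union bound over the `2^k - 1` nonempty subsets leaves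
a failure probability below `δ`.
-/

open MeasureTheory ProbabilityTheory Real Finset

theorem sum_abs_eq_two_mul_sum_filter_nonneg {ι : Type*} (s : Finset ι) (d : ι → ℝ)
    (h : ∑ i ∈ s, d i = 0) : ∑ i ∈ s, |d i| = 2 * ∑ i ∈ s with 0 ≤ d i, d i := by
  rw [← sum_filter_add_sum_filter_not s (0 ≤ d ·)] at h ⊢
  have hneg : ∑ i ∈ s with ¬0 ≤ d i, |d i| = -∑ i ∈ s with ¬0 ≤ d i, d i := by
    rw [← sum_neg_distrib]
    exact sum_congr rfl fun i hi => abs_of_neg (not_le.1 (mem_filter.1 hi).2)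
  rw [sum_congr rfl fun i hi => abs_of_nonneg (mem_filter.1 hi).2, hneg]
  linarith

section Hoeffding

variable {Ω α ι : Type*} [MeasurableSpace Ω] {μ : Measure Ω} [IsProbabilityMeasure μ]
  [MeasurableSpace α] [Fintype ι]

theorem measureReal_sum_indicator_sub_ge_le {X : ι → Ω → α} (hX : ∀ i, Measurable (X i))
    (hindep : iIndepFun X μ) {S : Set α} (hS : MeasurableSet S) {t : ℝ} (ht : 0 ≤ t) :
    μ.real {ω | t ≤ ∑ i, (S.indicator 1 (X i ω) - μ.real (X i ⁻¹' S))}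
      ≤ exp (-2 * t ^ 2 / Fintype.card ι) := by
  have hmean (i : ι) : μ[fun ω => S.indicator (1 : α → ℝ) (X i ω)] = μ.real (X i ⁻¹' S) := by
    simp_rw [← Set.indicator_comp_right]
    exact integral_indicator_one (hX i hS)
  have hsubG : ∀ i ∈ (univ : Finset ι), HasSubgaussianMGF
      (fun ω => S.indicator 1 (X i ω) - μ.real (X i ⁻¹' S)) ((‖(1 : ℝ) - 0‖₊ / 2) ^ 2) μ := by
    intro i _
    rw [← hmean i]
    refine hasSubgaussianMGF_of_mem_Icc ((measurable_one.indicator hS).comp (hX i)).aemeasurable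
      (ae_of_all _ fun ω => ?_)
    by_cases h : X i ω ∈ S <;> simp [h]
  have hindep' : iIndepFun (fun i ω => S.indicator 1 (X i ω) - μ.real (X i ⁻¹' S)) μ :=
    hindep.comp (fun i a => S.indicator 1 a - μ.real (X i ⁻¹' S))
      fun i => (measurable_one.indicator hS).sub_const _
  refine (HasSubgaussianMGF.measure_sum_ge_le_of_iIndepFun hindep' hsubG ht).trans_eq ?_
  simp only [sub_zero, nnnorm_one, one_div, inv_pow, sum_const, card_univ, nsmul_eq_mul,
    NNReal.coe_mul, NNReal.coe_natCast, NNReal.coe_inv, NNReal.coe_pow, NNReal.coe_ofNat, neg_mul,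
    exp_eq_exp]
  ring

end Hoeffding

section Empirical

variable {α : Type*} [DecidableEq α] {n : ℕ}

noncomputable def empiricalDist (x : Fin n → α) (j : α) : ℝ :=
  (1 / (n : ℝ)) * #{i | x i = j}

theorem sum_empiricalDist_eq (x : Fin n → α) (S : Finset α) :
    ∑ j ∈ S, empiricalDist x j = (1 / (n : ℝ)) * ∑ i, (S : Set α).indicator 1 (x i) := by
  simp only [empiricalDist, ← mul_sum, natCast_card_filter]
  rw [sum_comm]
  congr 1
  refine sum_congr rfl fun i _ => ?_
  simp [Set.indicator_apply, eq_comm]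

theorem sum_empiricalDist [Fintype α] (hn : 0 < n) (x : Fin n → α) :
    ∑ j, empiricalDist x j = 1 := by
  rw [sum_empiricalDist_eq, coe_univ]
  simp [hn.ne']

variable {Ω : Type*} [MeasurableSpace Ω] {μ : Measure Ω} [IsProbabilityMeasure μ]
  [Fintype α] [MeasurableSpace α] [MeasurableSingletonClass α]

theorem measureReal_sum_abs_empiricalDist_sub_ge_le (hn : 0 < n) {X : Fin n → Ω → α}
    (hX : ∀ i, Measurable (X i)) (hindep : iIndepFun X μ) {p : α → ℝ}
    (hlaw : ∀ i j, μ.real (X i ⁻¹' {j}) = p j) {t : ℝ} (ht : 0 < t) :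
    μ.real {ω | t ≤ ∑ j, |empiricalDist (fun i => X i ω) j - p j|}
      ≤ (2 ^ Fintype.card α - 1) * exp (-n * t ^ 2 / 2) := by
  have hlawS (i : Fin n) (S : Finset α) : μ.real (X i ⁻¹' S) = ∑ j ∈ S, p j := by
    rw [← sum_measureReal_preimage_singleton S fun j _ => hX i (measurableSet_singleton j)]
    exact sum_congr rfl fun j _ => hlaw i j
  have hp : ∑ j, p j = 1 := by
    rw [← hlawS ⟨0, hn⟩, coe_univ, Set.preimage_univ, probReal_univ]
  let E (S : Finset α) : Set Ω :=
    {ω | n * t / 2 ≤ ∑ i, ((S : Set α).indicator 1 (X i ω) - μ.real (X i ⁻¹' S))}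
  have hcover : {ω | t ≤ ∑ j, |empiricalDist (fun i => X i ω) j - p j|}
      ⊆ ⋃ S ∈ (univ : Finset (Finset α)).erase ∅, E S := by
    intro ω (hω : t ≤ ∑ j, |empiricalDist (fun i => X i ω) j - p j|)
    set x := fun i => X i ω
    set S : Finset α := {j | 0 ≤ empiricalDist x j - p j}
    have hl1 : ∑ j, |empiricalDist x j - p j| = 2 * ∑ j ∈ S, (empiricalDist x j - p j) :=
      sum_abs_eq_two_mul_sum_filter_nonneg _ _
        (by rw [sum_sub_distrib, sum_empiricalDist hn, hp, sub_self])
    have hcount : ∑ i, ((S : Set α).indicator 1 (x i) - μ.real (X i ⁻¹' S))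
        = n * ∑ j ∈ S, (empiricalDist x j - p j) := by
      simp only [sum_sub_distrib, sum_empiricalDist_eq, hlawS, sum_const, card_univ,
        Fintype.card_fin, nsmul_eq_mul]
      field_simp
    have hS : S ≠ ∅ := by
      rintro hS
      simp only [hS, sum_empty, mul_zero] at hl1
      linarith
    refine Set.mem_biUnion (mem_erase.2 ⟨hS, mem_univ S⟩) ?_
    show n * t / 2 ≤ _
    rw [hcount, mul_div_assoc]
    gcongr
    linarith
  have hE (S : Finset α) : μ.real (E S) ≤ exp (-n * t ^ 2 / 2) := by
    refine (measureReal_sum_indicator_sub_ge_le hX hindep S.measurableSet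
      (by positivity)).trans_eq ?_
    congr 1
    simp only [neg_mul, Fintype.card_fin]
    field_simp
  calc _ ≤ ∑ S ∈ (univ : Finset (Finset α)).erase ∅, μ.real (E S) :=
        (measureReal_mono hcover (measure_ne_top _ _)).trans (measureReal_biUnion_finset_le _ _)
    _ ≤ ∑ S ∈ (univ : Finset (Finset α)).erase ∅, exp (-n * t ^ 2 / 2) :=
        sum_le_sum fun S _ => hE S
    _ = _ := by
      rw [sum_const, card_erase_of_mem (mem_univ _), card_univ, Fintype.card_finset, nsmul_eq_mul]
      push_cast [Nat.one_le_two_pow]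
      rfl

end Empirical

theorem empirical_l1_reconstruction_general
    {Ω : Type*} [MeasurableSpace Ω] (μ : Measure Ω) [IsProbabilityMeasure μ]
    (k n : ℕ) (hn : 0 < n)
    (p : Fin k → ℝ)
    (X : Fin n → Ω → Fin k) (hXmeas : ∀ i, Measurable (X i))
    (hindep : iIndepFun X μ)
    (hlaw : ∀ i j, (μ {ω | X i ω = j}).toReal = p j)
    (phat : Ω → Fin k → ℝ)
    (hphat : ∀ ω j, phat ω j
      = (1 / (n : ℝ)) * (Finset.univ.filter (fun i => X i ω = j)).card)
    (δ : ℝ) (hδ0 : 0 < δ) (hδ1 : δ < 1)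
    (ε : ℝ) (hε : ε = Real.sqrt ((2 / n) * (k * Real.log 2 + Real.log (1 / δ)))) :
    1 - δ < (μ {ω | ∑ j, |phat ω j - p j| < ε}).toReal := by
  have hphat' : phat = fun ω => empiricalDist (fun i => X i ω) :=
    funext fun ω => funext (hphat ω)
  have hε2 : 0 < (2 / n) * (k * log 2 + log (1 / δ)) := by
    have : 0 < log (1 / δ) := log_pos ((one_lt_div hδ0).2 hδ1)
    positivity
  have hε0 : 0 < ε := hε ▸ sqrt_pos.2 hε2
  have hexp : exp (-n * ε ^ 2 / 2) = δ / 2 ^ k := by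
    rw [hε, sq_sqrt hε2.le, show -n * (2 / n * (k * log 2 + log (1 / δ))) / 2
      = -log (2 ^ k * (1 / δ)) by rw [log_mul (by positivity) (by positivity), log_pow]; field_simp,
      exp_neg, exp_log (by positivity)]
    field_simp
  have hbad : μ.real {ω | ε ≤ ∑ j, |phat ω j - p j|} ≤ δ - δ / 2 ^ k := by
    have h := measureReal_sum_abs_empiricalDist_sub_ge_le hn hXmeas hindep hlaw hε0
    rw [Fintype.card_fin, hexp] at h
    simp only [hphat']
    linarith [show (2 ^ k - 1 : ℝ) * (δ / 2 ^ k) = δ - δ / 2 ^ k by field_simp]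
  have hcover : 1 ≤ μ.real {ω | ∑ j, |phat ω j - p j| < ε}
      + μ.real {ω | ε ≤ ∑ j, |phat ω j - p j|} := by
    refine le_of_eq_of_le ?_ (measureReal_union_le _ _)
    rw [← Set.ofPred_or]
    simp [lt_or_ge]
  have : 0 < δ / 2 ^ k := by positivity
  rw [← measureReal_def]
  linarith

/-- If `p` is a probability distribution on `Fin k`, `X 0, ..., X (n-1)` are
independent samples drawn from `p`, and `phat ω` is the empirical distribution, then for any
`δ ∈ (0,1)`, setting `ε = sqrt ((2/n) * (k * log 2 + log (1/δ)))`, the event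
`‖phat - p‖₁ < ε` holds with probability greater than `1 - δ`. -/
theorem empirical_l1_reconstruction
    {Ω : Type*} [MeasurableSpace Ω] (μ : Measure Ω) [IsProbabilityMeasure μ]
    (k n : ℕ) (hn : 0 < n)
    (p : Fin k → ℝ) (hp0 : ∀ j, 0 ≤ p j) (hp1 : ∑ j, p j = 1)
    (X : Fin n → Ω → Fin k) (hXmeas : ∀ i, Measurable (X i))
    (hindep : iIndepFun X μ)
    (hlaw : ∀ i j, (μ {ω | X i ω = j}).toReal = p j)
    (phat : Ω → Fin k → ℝ)
    (hphat : ∀ ω j, phat ω j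
      = (1 / (n : ℝ)) * (Finset.univ.filter (fun i => X i ω = j)).card)
    (δ : ℝ) (hδ0 : 0 < δ) (hδ1 : δ < 1)
    (ε : ℝ) (hε : ε = Real.sqrt ((2 / n) * (k * Real.log 2 + Real.log (1 / δ)))) :
    1 - δ < (μ {ω | ∑ j, |phat ω j - p j| < ε}).toReal :=
  empirical_l1_reconstruction_general μ k n hn p X hXmeas hindep hlaw phat hphat δ hδ0 hδ1 ε hε
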